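/- Let Π = Π(ρ, F) be the transition matrix of the network formation game on S = (E → Bool). If π : S → ℝ satisfies π g ≥ 0 for all g, ∑_{g ∈ S} π g = 1, and ∑_{g ∈ S} π g * Π g w = π w for every w ∈ S (i.e. π is a stationary distribution), then π g > 0 for every g ∈ S: the stationary distribution puts positive mass on every network configuration. -/

import Mathlib

/-!
A stationary distribution is positive somewhere, and its support is closed under every
transition of positive probability: `π w = ∑ g, π g * Π g w ≥ π g * Π g w`. Since flipping a
single link has probability `ρ e g * F g e > 0`, the support is closed under changing any one
coordinate, and any network is reached from any other by changing coordinates one at a time.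
-/

open Matrix Finset Filter

/-- Flip the link `e` in network `g`. -/
def flipL {E : Type*} [DecidableEq E] (e : E) (g : E → Bool) : E → Bool :=
  Function.update g e (!(g e))

/-- The one-step transition matrix of the network formation game. -/
noncomputable def netPi {E : Type*} [DecidableEq E] [Fintype E]
    (ρ : E → (E → Bool) → ℝ) (F : (E → Bool) → E → ℝ) :
    Matrix (E → Bool) (E → Bool) ℝ :=
  Matrix.of fun g w =>
    if g = w then ∑ e, ρ e g * (1 - F g e)
    else ∑ e, if w = flipL e g then ρ e g * F g e else 0

/-- A meeting function: strictly positive selection probabilities summing to one. -/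
def IsMeeting {E : Type*} [Fintype E] (ρ : E → (E → Bool) → ℝ) : Prop :=
  (∀ e g, 0 < ρ e g) ∧ ∀ g, ∑ e, ρ e g = 1

/-- An acceptance function: probabilities strictly between 0 and 1, complementary under flips. -/
def IsAcceptance {E : Type*} [DecidableEq E] (F : (E → Bool) → E → ℝ) : Prop :=
  (∀ g e, 0 < F g e ∧ F g e < 1) ∧ ∀ g e, F g e + F (flipL e g) e = 1

theorem Function.forall_of_forall_update {α β : Type*} [DecidableEq α] [Fintype α]
    {p : (α → β) → Prop} (hupdate : ∀ f a b, p f → p (Function.update f a b))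
    {f : α → β} (hf : p f) (g : α → β) : p g := by
  suffices h : ∀ s : Finset α, p fun a => if a ∈ s then g a else f a by
    simpa using h univ
  intro s
  induction s using Finset.induction_on with
  | empty => simpa using hf
  | insert a s _ ih =>
    convert hupdate _ a (g a) ih using 1
    ext x
    by_cases hx : x = a <;> simp [hx, Function.update]

theorem pos_of_stationary {ι : Type*} [Fintype ι] {P : Matrix ι ι ℝ} {π : ι → ℝ}
    (hP : ∀ i j, 0 ≤ P i j) (hπ : ∀ i, 0 ≤ π i) (hstat : ∀ j, ∑ i, π i * P i j = π j)
    {i j : ι} (hi : 0 < π i) (hij : 0 < P i j) : 0 < π j :=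
  calc 0 < π i * P i j := mul_pos hi hij
    _ ≤ ∑ k, π k * P k j :=
      single_le_sum (fun k _ => mul_nonneg (hπ k) (hP k j)) (mem_univ i)
    _ = π j := hstat j

section flipL

variable {E : Type*} [DecidableEq E]

@[simp]
theorem flipL_apply_self (e : E) (g : E → Bool) : flipL e g e = !g e := by
  simp [flipL]

theorem flipL_ne_self (e : E) (g : E → Bool) : flipL e g ≠ g :=
  fun h => by simpa using congrFun h e

theorem flipL_left_injective (g : E → Bool) : Function.Injective fun e => flipL e g := by
  intro e e' h
  by_contra hne
  have := congrFun h e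
  simp [flipL, Function.update_of_ne hne] at this

theorem update_eq_self_or_eq_flipL (g : E → Bool) (e : E) (b : Bool) :
    Function.update g e b = g ∨ Function.update g e b = flipL e g := by
  by_cases hb : b = g e
  · exact Or.inl (hb ▸ Function.update_eq_self e g)
  · exact Or.inr (by rw [flipL, Bool.eq_not.mpr hb])

end flipL

section netPi

variable {E : Type*} [DecidableEq E] [Fintype E]
  {ρ : E → (E → Bool) → ℝ} {F : (E → Bool) → E → ℝ}

theorem netPi_apply_flipL (g : E → Bool) (e : E) :
    netPi ρ F g (flipL e g) = ρ e g * F g e := by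
  have hflip : ∀ e', flipL e g = flipL e' g ↔ e' = e :=
    fun e' => ⟨fun h => (flipL_left_injective g h).symm, fun h => h ▸ rfl⟩
  simp only [netPi, of_apply, if_neg (flipL_ne_self e g).symm, hflip,
    sum_ite_eq', mem_univ, if_true]

theorem netPi_nonneg (hρ : ∀ e g, 0 ≤ ρ e g) (hF : ∀ g e, 0 ≤ F g e ∧ F g e ≤ 1)
    (g w : E → Bool) : 0 ≤ netPi ρ F g w := by
  simp only [netPi, of_apply]
  split_ifs
  · exact sum_nonneg fun e _ => mul_nonneg (hρ e g) (sub_nonneg.mpr (hF g e).2)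
  · refine sum_nonneg fun e _ => ?_
    split_ifs
    · exact mul_nonneg (hρ e g) (hF g e).1
    · exact le_rfl

end netPi

theorem stationary_pos_general {E : Type*} [DecidableEq E] [Fintype E]
    (ρ : E → (E → Bool) → ℝ) (F : (E → Bool) → E → ℝ)
    (hρ : IsMeeting ρ) (hF : IsAcceptance F)
    (π : (E → Bool) → ℝ) (hπnonneg : ∀ g, 0 ≤ π g) (hπsum : ∑ g, π g = 1)
    (hπstat : ∀ w, ∑ g, π g * netPi ρ F g w = π w) :
    ∀ g : E → Bool, 0 < π g := by
  have hP : ∀ g w, 0 ≤ netPi ρ F g w :=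
    netPi_nonneg (fun e g => (hρ.1 e g).le) fun g e => ⟨(hF.1 g e).1.le, (hF.1 g e).2.le⟩
  have hflip : ∀ g e, 0 < π g → 0 < π (flipL e g) := fun g e hg =>
    pos_of_stationary hP hπnonneg hπstat hg
      (by rw [netPi_apply_flipL]; exact mul_pos (hρ.1 e g) (hF.1 g e).1)
  obtain ⟨g₀, -, hg₀⟩ : ∃ g ∈ univ, (0 : ℝ) < π g :=
    exists_lt_of_sum_lt (by simp [hπsum])
  refine Function.forall_of_forall_update (fun g e b hg => ?_) hg₀
  rcases update_eq_self_or_eq_flipL g e b with h | h <;> rw [h]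
  exacts [hg, hflip g e hg]

/-- Any stationary distribution of the network formation game puts strictly positive
mass on every network configuration. -/
theorem stationary_pos {E : Type*} [DecidableEq E] [Fintype E] [Nonempty E]
    (ρ : E → (E → Bool) → ℝ) (F : (E → Bool) → E → ℝ)
    (hρ : IsMeeting ρ) (hF : IsAcceptance F)
    (π : (E → Bool) → ℝ) (hπnonneg : ∀ g, 0 ≤ π g) (hπsum : ∑ g, π g = 1)
    (hπstat : ∀ w, ∑ g, π g * netPi ρ F g w = π w) :
    ∀ g : E → Bool, 0 < π g :=
  stationary_pos_general ρ F hρ hF π hπnonneg hπsum hπstat
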